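/- Let σ and μ be smooth functions on a Riemannian d-manifold, and suppose that near Λ := {σ=0} ∩ {μ=0} we have |dμ|² + 2μρ_μ = 1 + μ^d R₁, |dσ|² + 2σρ_σ = 1 + σ^d R₂, and g(dμ,dσ) + μρ_σ + σρ_μ = μ C + σ^{d-1} R₃ for smooth functions R₁,R₂,R₃,C, where ρ_ν := -(1/d)(Δν + Jν) and d ≥ 3. Then along Λ, C = ÎI^Σ(m̂, m̂), where Σ = {σ=0}, m̂ = dμ|_Λ is the unit conormal of Λ inside Σ, and ÎI^Σ is the trace-free second fundamental form of Σ. -/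

import Mathlib

/- Coordinate-based Riemannian calculus on `ℝᵈ`, used to state the results of the paper
"Conformal Geometry of Embedded Manifolds with Boundary from Universal Holographic Formulae". -/

noncomputable section

open Matrix

namespace Holo

variable {d : ℕ}

/-- Points of the coordinate chart `ℝᵈ`. -/
abbrev Pt (d : ℕ) := Fin d → ℝ

/-- Partial derivative in the `i`-th coordinate direction. -/
def pd (i : Fin d) (f : Pt d → ℝ) (x : Pt d) : ℝ :=
  fderiv ℝ f x (Pi.single i 1)

/-- A Riemannian metric presented in coordinates. -/
abbrev Met (d : ℕ) := Pt d → Matrix (Fin d) (Fin d) ℝ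

/-- The inverse metric `g^{ij}`. -/
def ginv (g : Met d) (x : Pt d) : Matrix (Fin d) (Fin d) ℝ := (g x)⁻¹

/-- Christoffel symbols `Γ^k_{ij}` of the Levi-Civita connection of `g`. -/
def christof (g : Met d) (k i j : Fin d) (x : Pt d) : ℝ :=
  (1 / 2) * ∑ l, ginv g x k l *
    (pd i (fun y => g y j l) x + pd j (fun y => g y i l) x - pd l (fun y => g y i j) x)

/-- Riemann curvature `R^l_{ijk}`. -/
def riemann (g : Met d) (l i j k : Fin d) (x : Pt d) : ℝ :=
  pd i (fun y => christof g l j k y) x - pd j (fun y => christof g l i k y) x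
    + ∑ m, (christof g l i m x * christof g m j k x - christof g l j m x * christof g m i k x)

/-- Ricci curvature `Ric_{jk} = R^i_{ijk}`. -/
def ricci (g : Met d) (j k : Fin d) (x : Pt d) : ℝ := ∑ i, riemann g i i j k x

/-- Scalar curvature `Sc = g^{jk} Ric_{jk}`. -/
def scal (g : Met d) (x : Pt d) : ℝ := ∑ j, ∑ k, ginv g x j k * ricci g j k x

/-- The trace-adjusted scalar curvature `J = Sc/(2(d-1))`. -/
def Jc (g : Met d) (x : Pt d) : ℝ := scal g x / (2 * ((d : ℝ) - 1))

/-- Laplace–Beltrami operator `Δf = g^{ij}(∂_i∂_j f - Γ^k_{ij} ∂_k f)` (negative spectrum). -/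
def laplacian (g : Met d) (f : Pt d → ℝ) (x : Pt d) : ℝ :=
  ∑ i, ∑ j, ginv g x i j * (pd i (pd j f) x - ∑ k, christof g k i j x * pd k f x)

/-- Inner product of gradients, `g(du, dv) = g^{ij} ∂_i u ∂_j v`. -/
def gradInner (g : Met d) (u v : Pt d → ℝ) (x : Pt d) : ℝ :=
  ∑ i, ∑ j, ginv g x i j * pd i u x * pd j v x

/-- Squared gradient norm `|du|_g²`. -/
def gradSq (g : Met d) (u : Pt d → ℝ) (x : Pt d) : ℝ := gradInner g u u x

/-- `ρ_ν := -(1/d)(Δν + Jν)`. -/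
def rho (g : Met d) (ν : Pt d → ℝ) (x : Pt d) : ℝ :=
  -(1 / (d : ℝ)) * (laplacian g ν x + Jc g x * ν x)

/-- The S-curvature representative `S_ν = |dν|² + 2νρ_ν`. -/
def Sdens (g : Met d) (ν : Pt d → ℝ) (x : Pt d) : ℝ := gradSq g ν x + 2 * ν x * rho g ν x

/-- The weight-(1,1) bracket `⟨σ,μ⟩ = g(dσ,dμ) + σρ_μ + μρ_σ`. -/
def bracket (g : Met d) (σ μ : Pt d → ℝ) (x : Pt d) : ℝ :=
  gradInner g σ μ x + σ x * rho g μ x + μ x * rho g σ x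

/-- Covariant Hessian `∇_a ∂_b μ`. -/
def covHess (g : Met d) (μ : Pt d → ℝ) (a b : Fin d) (x : Pt d) : ℝ :=
  pd a (pd b μ) x - ∑ c, christof g c a b x * pd c μ x

/-- Unit conormal (covector) `m̂_b = ∂_b μ / |dμ|_g` of the level sets of `μ`. -/
def unitConormal (g : Met d) (μ : Pt d → ℝ) (b : Fin d) (x : Pt d) : ℝ :=
  pd b μ x / Real.sqrt (gradSq g μ x)

/-- Unit normal vector `m̂^a = g^{ab} m̂_b`. -/
def normalVec (g : Met d) (μ : Pt d → ℝ) (a : Fin d) (x : Pt d) : ℝ :=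
  ∑ b, ginv g x a b * unitConormal g μ b x

/-- Covariant derivative `∇_a m̂_b` of the unit conormal. -/
def covDConormal (g : Met d) (μ : Pt d → ℝ) (a b : Fin d) (x : Pt d) : ℝ :=
  pd a (fun y => unitConormal g μ b y) x - ∑ c, christof g c a b x * unitConormal g μ c x

/-- Mean curvature of the level sets of `μ`:
`H = (1/(d-1)) (g^{ab} - m̂^a m̂^b) ∇_a m̂_b` (average of eigenvalues of II). -/
def meanCurv (g : Met d) (μ : Pt d → ℝ) (x : Pt d) : ℝ :=
  (1 / ((d : ℝ) - 1)) *
    ∑ a, ∑ b, (ginv g x a b - normalVec g μ a x * normalVec g μ b x) * covDConormal g μ a b x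


section
variable {d : ℕ}


abbrev SM {d : ℕ} (f : Pt d → ℝ) : Prop := ContDiff ℝ (⊤ : ℕ∞) f

lemma SM.of_top {f : Pt d → ℝ} (hf : ContDiff ℝ (⊤ : ℕ∞) f) : SM f := hf.of_le (by simp)

lemma SM.diffAt {f : Pt d → ℝ} (hf : SM f) (x : Pt d) : DifferentiableAt ℝ f x :=
  (hf.differentiable (by simp)).differentiableAt

lemma SM.pd {f : Pt d → ℝ} (hf : SM f) (i : Fin d) : SM (pd i f) := by
  have h := hf.fderiv_right (m := (⊤ : ℕ∞)) (by exact_mod_cast le_top)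
  exact h.clm_apply contDiff_const

lemma pd_add {f g : Pt d → ℝ} {x : Pt d} (hf : DifferentiableAt ℝ f x)
    (hg : DifferentiableAt ℝ g x) (i : Fin d) :
    pd i (fun y => f y + g y) x = pd i f x + pd i g x := by
  simp [pd, fderiv_fun_add hf hg]

lemma pd_mul {f g : Pt d → ℝ} {x : Pt d} (hf : DifferentiableAt ℝ f x)
    (hg : DifferentiableAt ℝ g x) (i : Fin d) :
    pd i (fun y => f y * g y) x = f x * pd i g x + g x * pd i f x := by
  simp [pd, fderiv_fun_mul hf hg]

lemma pd_const {x : Pt d} (i : Fin d) (c : ℝ) : pd i (fun _ => c) x = 0 := by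
  simp [pd]

lemma pd_sum {ι : Type*} {s : Finset ι} {F : ι → Pt d → ℝ} {x : Pt d}
    (hF : ∀ j ∈ s, DifferentiableAt ℝ (F j) x) (i : Fin d) :
    pd i (fun y => ∑ j ∈ s, F j y) x = ∑ j ∈ s, pd i (F j) x := by
  simp [pd, fderiv_fun_sum hF]

end
section
variable {d : ℕ}
lemma SM.mul {f g : Pt d → ℝ} (hf : SM f) (hg : SM g) : SM (fun y => f y * g y) := ContDiff.mul hf hg
lemma SM.add {f g : Pt d → ℝ} (hf : SM f) (hg : SM g) : SM (fun y => f y + g y) := ContDiff.add hf hg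
lemma SM.sub {f g : Pt d → ℝ} (hf : SM f) (hg : SM g) : SM (fun y => f y - g y) := ContDiff.sub hf hg
lemma SM.const (c : ℝ) : SM (fun _ : Pt d => c) := contDiff_const
lemma SM.sum {ι : Type*} {s : Finset ι} {F : ι → Pt d → ℝ} (hF : ∀ j ∈ s, SM (F j)) :
    SM (fun y => ∑ j ∈ s, F j y) := by
  classical
  induction s using Finset.induction with
  | empty => simpa using SM.const 0
  | insert a s hnot ih =>
      simp only [Finset.sum_insert hnot]
      exact (hF a (by simp)).add (ih fun j hj => hF j (by simp [hj]))
lemma SM.prod {ι : Type*} {s : Finset ι} {F : ι → Pt d → ℝ} (hF : ∀ j ∈ s, SM (F j)) :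
    SM (fun y => ∏ j ∈ s, F j y) := by
  classical
  induction s using Finset.induction with
  | empty => simpa using SM.const 1
  | insert a s hnot ih =>
      simp only [Finset.prod_insert hnot]
      exact (hF a (by simp)).mul (ih fun j hj => hF j (by simp [hj]))
lemma SM.pow {f : Pt d → ℝ} (hf : SM f) (n : ℕ) : SM (fun y => f y ^ n) := by
  induction n with
  | zero => simpa using SM.const 1
  | succ n ih => simpa [pow_succ] using ih.mul hf

lemma pd_pow {f : Pt d → ℝ} {x : Pt d} (hf : SM f) (n : ℕ) (i : Fin d) :
    pd i (fun y => f y ^ n) x = (n : ℝ) * f x ^ (n - 1) * pd i f x := by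
  induction n with
  | zero => simpa using pd_const i 1
  | succ n ih =>
      have h1 : pd i (fun y => f y ^ n * f y) x
          = f x ^ n * pd i f x + f x * pd i (fun y => f y ^ n) x :=
        pd_mul ((hf.pow n).diffAt x) (hf.diffAt x) i
      simp only [pow_succ]
      rw [h1, ih]
      rcases Nat.eq_zero_or_pos n with h | h
      · subst h; simp
      · have : n - 1 + 1 = n := Nat.succ_pred_eq_of_pos h
        obtain ⟨m, rfl⟩ : ∃ m, n = m + 1 := ⟨n - 1, (Nat.succ_pred_eq_of_pos h).symm⟩
        simp only [Nat.add_sub_cancel]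
        push_cast
        ring

lemma pd_pow_mul_zero {f R : Pt d → ℝ} {x : Pt d} (hf : SM f) (hR : SM R) {n : ℕ}
    (hn : 2 ≤ n) (hfx : f x = 0) (i : Fin d) :
    pd i (fun y => f y ^ n * R y) x = 0 := by
  rw [pd_mul ((hf.pow n).diffAt x) (hR.diffAt x) i, pd_pow hf n i, hfx]
  have h1 : n - 1 ≠ 0 := by omega
  simp [zero_pow h1, zero_pow (by omega : n ≠ 0)]
end
section
variable {d : ℕ}

section ginv
variable {g : Met d} (hg : ∀ i j, SM fun x => g x i j) (hgpos : ∀ x, (g x).PosDef)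

lemma SM.det {M : Pt d → Matrix (Fin d) (Fin d) ℝ} (hM : ∀ i j, SM fun x => M x i j) :
    SM (fun x => (M x).det) := by
  have : (fun x => (M x).det)
      = fun x => ∑ τ : Equiv.Perm (Fin d), ((Equiv.Perm.sign τ : ℤ) : ℝ) * ∏ i, M x (τ i) i := by
    funext x; rw [Matrix.det_apply']
  rw [this]
  exact SM.sum fun τ _ => (SM.const _).mul (SM.prod fun i _ => hM _ _)

include hg hgpos in
lemma SM.ginv_entry (i j : Fin d) : SM fun x => ginv g x i j := by
  have hdet : SM fun x => (g x).det := SM.det hg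
  have hadj : SM fun x => (g x).adjugate i j := by
    have : (fun x => (g x).adjugate i j)
        = fun x => ((g x).updateRow j (Pi.single i 1)).det := by
      funext x; rw [Matrix.adjugate_apply]
    rw [this]
    refine SM.det fun k l => ?_
    by_cases h : k = j
    · have h2 : (fun x => ((g x).updateRow j (Pi.single i (1:ℝ))) k l)
          = fun _ => (Pi.single i (1:ℝ) : Fin d → ℝ) l := by
        funext x; rw [Matrix.updateRow_apply, if_pos h]
      rw [h2]; exact SM.const _
    · have h2 : (fun x => ((g x).updateRow j (Pi.single i (1:ℝ))) k l)
          = fun x => g x k l := by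
        funext x; rw [Matrix.updateRow_apply, if_neg h]
      rw [h2]; exact hg k l
  have : (fun x => ginv g x i j) = fun x => ((g x).det)⁻¹ * (g x).adjugate i j := by
    funext x
    rw [ginv, Matrix.inv_def, Matrix.smul_apply, Ring.inverse_eq_inv', smul_eq_mul]
  rw [this]
  exact (hdet.inv fun x => (hgpos x).det_pos.ne').mul hadj
end ginv
end
section
variable {d : ℕ}

lemma pd_pd_symm {f : Pt d → ℝ} (hf : SM f) (a b : Fin d) (x : Pt d) :
    pd a (pd b f) x = pd b (pd a f) x := by
  have hdf : Differentiable ℝ f := hf.differentiable (by simp)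
  have hder : ∀ y, HasFDerivAt f (fderiv ℝ f y) y := fun y => (hdf y).hasFDerivAt
  have h2 : DifferentiableAt ℝ (fderiv ℝ f) x := by
    have := hf.fderiv_right (m := (1 : ℕ∞)) (by exact_mod_cast le_top)
    exact (this.differentiable (by simp)).differentiableAt
  have hsym := second_derivative_symmetric hder h2.hasFDerivAt
  have key : ∀ v w, fderiv ℝ (fun y => fderiv ℝ f y w) x v
      = fderiv ℝ (fderiv ℝ f) x v w := by
    intro v w
    rw [fderiv_clm_apply h2 (differentiableAt_const w)]
    simp
  have e1 : pd a (pd b f) x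
      = fderiv ℝ (fun y => fderiv ℝ f y (Pi.single b 1)) x (Pi.single a 1) := rfl
  have e2 : pd b (pd a f) x
      = fderiv ℝ (fun y => fderiv ℝ f y (Pi.single a 1)) x (Pi.single b 1) := rfl
  rw [e1, e2, key, key, hsym]
end
section
variable {d : ℕ} {g : Met d}

section metric
variable (hg : ∀ i j, SM fun x => g x i j) (hgpos : ∀ x, (g x).PosDef)

include hgpos in
lemma gsymm (x : Pt d) (i j : Fin d) : g x i j = g x j i := by
  have := (hgpos x).isHermitian.apply j i
  simpa using this

include hgpos in
lemma ginv_symm (x : Pt d) (i j : Fin d) : ginv g x i j = ginv g x j i := by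
  have := (hgpos x).inv.isHermitian.apply j i
  simpa [ginv] using this

include hgpos in
lemma ginv_mul_g (x : Pt d) (i j : Fin d) :
    ∑ k, ginv g x i k * g x k j = if i = j then 1 else 0 := by
  have h := Matrix.nonsing_inv_mul (g x) (hgpos x).det_pos.ne'.isUnit
  have := congrFun (congrFun h i) j
  simpa [Matrix.mul_apply, Matrix.one_apply, ginv] using this

include hgpos in
lemma g_mul_ginv (x : Pt d) (i j : Fin d) :
    ∑ k, g x i k * ginv g x k j = if i = j then 1 else 0 := by
  have h := Matrix.mul_nonsing_inv (g x) (hgpos x).det_pos.ne'.isUnit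
  have := congrFun (congrFun h i) j
  simpa [Matrix.mul_apply, Matrix.one_apply, ginv] using this

include hg hgpos in
lemma pd_ginv (x : Pt d) (a i l : Fin d) :
    pd a (fun y => ginv g y i l) x
      = -∑ q, ∑ p, ginv g x i p * pd a (fun y => g y p q) x * ginv g x q l := by
  have hginv : ∀ i j, SM fun x => ginv g x i j := SM.ginv_entry hg hgpos
  -- derivative of the identity ∑ k, ginv_{i k} g_{k j} = δ_{i j}
  have key : ∀ j, ∑ k, (pd a (fun y => ginv g y i k) x * g x k j
      + ginv g x i k * pd a (fun y => g y k j) x) = 0 := by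
    intro j
    have hfun : (fun y => ∑ k, ginv g y i k * g y k j)
        = fun _ => if i = j then (1:ℝ) else 0 := by
      funext y; exact ginv_mul_g hgpos y i j
    have h0 : pd a (fun y => ∑ k, ginv g y i k * g y k j) x = 0 := by
      rw [hfun]; exact pd_const a _
    rw [← h0, pd_sum (fun k _ => ((hginv i k).mul (hg k j)).diffAt x) a]
    exact Finset.sum_congr rfl fun k _ => by
      rw [pd_mul ((hginv i k).diffAt x) ((hg k j).diffAt x) a]; ring
  have key2 : ∀ j, ∑ k, pd a (fun y => ginv g y i k) x * g x k j
      = -∑ k, ginv g x i k * pd a (fun y => g y k j) x := by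
    intro j
    have := key j
    rw [Finset.sum_add_distrib] at this
    linarith
  calc pd a (fun y => ginv g y i l) x
      = ∑ k, pd a (fun y => ginv g y i k) x * (∑ q, g x k q * ginv g x q l) := by
        rw [Finset.sum_congr rfl fun k _ => by
          rw [g_mul_ginv hgpos x k l]]
        simp [mul_ite]
    _ = ∑ q, (∑ k, pd a (fun y => ginv g y i k) x * g x k q) * ginv g x q l := by
        simp_rw [Finset.mul_sum, Finset.sum_mul]
        rw [Finset.sum_comm]
        exact Finset.sum_congr rfl fun k _ => Finset.sum_congr rfl fun q _ => by ring
    _ = ∑ q, (-∑ p, ginv g x i p * pd a (fun y => g y p q) x) * ginv g x q l := by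
        exact Finset.sum_congr rfl fun q _ => by rw [key2 q]
    _ = -∑ q, ∑ p, ginv g x i p * pd a (fun y => g y p q) x * ginv g x q l := by
        rw [← Finset.sum_neg_distrib]
        exact Finset.sum_congr rfl fun q _ => by rw [neg_mul, Finset.sum_mul]

end metric
end
section
variable {d : ℕ}

lemma sum_swap12 (f : Fin d → Fin d → ℝ) : ∑ i, ∑ j, f i j = ∑ j, ∑ i, f i j :=
  Finset.sum_comm

lemma sum4_swap (f : Fin d → Fin d → Fin d → Fin d → ℝ) :
    ∑ i, ∑ j, ∑ q, ∑ p, f i j q p = ∑ q, ∑ p, ∑ i, ∑ j, f i j q p := by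
  calc ∑ i, ∑ j, ∑ q, ∑ p, f i j q p
      = ∑ i, ∑ q, ∑ j, ∑ p, f i j q p :=
        Finset.sum_congr rfl fun i _ => Finset.sum_comm
    _ = ∑ q, ∑ i, ∑ j, ∑ p, f i j q p := Finset.sum_comm
    _ = ∑ q, ∑ i, ∑ p, ∑ j, f i j q p :=
        Finset.sum_congr rfl fun q _ => Finset.sum_congr rfl fun i _ => Finset.sum_comm
    _ = ∑ q, ∑ p, ∑ i, ∑ j, f i j q p :=
        Finset.sum_congr rfl fun q _ => Finset.sum_comm
end
section
variable {d : ℕ}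


variable {g : Met d}

section smooth
variable (hg : ∀ i j, SM fun x => g x i j) (hgpos : ∀ x, (g x).PosDef)
include hg hgpos

lemma SM.christof' (k i j : Fin d) : SM fun x => christof g k i j x := by
  unfold christof
  exact (SM.const _).mul (SM.sum fun l _ => (SM.ginv_entry hg hgpos k l).mul
    ((((hg j l).pd i).add ((hg i l).pd j)).sub ((hg i j).pd l)))

lemma SM.gradInner' {u v : Pt d → ℝ} (hu : SM u) (hv : SM v) :
    SM fun x => gradInner g u v x := by
  unfold gradInner
  exact SM.sum fun i _ => SM.sum fun j _ =>
    ((SM.ginv_entry hg hgpos i j).mul (hu.pd i)).mul (hv.pd j)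
end smooth

section L3
variable (hg : ∀ i j, SM fun x => g x i j) (hgpos : ∀ x, (g x).PosDef)

include hg hgpos in
lemma pd_gradInner_expand {u v : Pt d → ℝ} (hu : SM u) (hv : SM v) (x : Pt d) (a : Fin d) :
    pd a (fun y => gradInner g u v y) x
      = ∑ i, ∑ j, (pd a (fun y => ginv g y i j) x * pd i u x * pd j v x
          + ginv g x i j * pd a (pd i u) x * pd j v x
          + ginv g x i j * pd i u x * pd a (pd j v) x) := by
  have hginv := SM.ginv_entry hg hgpos
  have hterm : ∀ i j : Fin d, SM fun y => ginv g y i j * pd i u y * pd j v y :=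
    fun i j => ((hginv i j).mul (hu.pd i)).mul (hv.pd j)
  unfold gradInner
  rw [pd_sum (fun i _ => (SM.sum fun j _ => hterm i j).diffAt x) a]
  refine Finset.sum_congr rfl fun i _ => ?_
  rw [pd_sum (fun j _ => (hterm i j).diffAt x) a]
  refine Finset.sum_congr rfl fun j _ => ?_
  rw [pd_mul (((hginv i j).mul (hu.pd i)).diffAt x) ((hv.pd j).diffAt x) a,
    pd_mul ((hginv i j).diffAt x) ((hu.pd i).diffAt x) a]
  ring
end L3
end
section
variable {d : ℕ} {g : Met d}

private lemma L3key (Dg : Fin d → Fin d → Fin d → ℝ) (hDg : ∀ k p q, Dg k p q = Dg k q p)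
    (a : Fin d) (U V : Fin d → ℝ) :
    ∑ q, ∑ p, Dg a p q * U p * V q
      = ∑ b, U b * ((1/2) * ∑ l, V l * (Dg a b l + Dg b a l - Dg l a b))
        + ∑ b, V b * ((1/2) * ∑ l, U l * (Dg a b l + Dg b a l - Dg l a b)) := by
  have h1 : ∑ b, U b * ((1/2) * ∑ l, V l * (Dg a b l + Dg b a l - Dg l a b))
      = ∑ b, ∑ l, (1/2) * (U b * V l * (Dg a b l + Dg b a l - Dg l a b)) := by
    refine Finset.sum_congr rfl fun b _ => ?_
    rw [Finset.mul_sum, Finset.mul_sum]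
    exact Finset.sum_congr rfl fun l _ => by ring
  have h2 : ∑ b, V b * ((1/2) * ∑ l, U l * (Dg a b l + Dg b a l - Dg l a b))
      = ∑ b, ∑ l, (1/2) * (U b * V l * (Dg a l b + Dg l a b - Dg b a l)) := by
    rw [Finset.sum_comm]
    refine Finset.sum_congr rfl fun b _ => ?_
    rw [Finset.mul_sum, Finset.mul_sum]
    exact Finset.sum_congr rfl fun l _ => by ring
  rw [h1, h2, ← Finset.sum_add_distrib]
  rw [Finset.sum_comm]
  refine Finset.sum_congr rfl fun p _ => ?_
  rw [← Finset.sum_add_distrib]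
  refine Finset.sum_congr rfl fun q _ => ?_
  rw [hDg a q p]
  ring

private lemma L3core (Gi : Fin d → Fin d → ℝ) (hGi : ∀ i j, Gi i j = Gi j i)
    (Dg : Fin d → Fin d → Fin d → ℝ) (hDg : ∀ k p q, Dg k p q = Dg k q p)
    (Du Dv Hu Hv : Fin d → ℝ) (a : Fin d) :
    ∑ i, ∑ j, ((-∑ q, ∑ p, Gi i p * Dg a p q * Gi q j) * Du i * Dv j
        + Gi i j * Hu i * Dv j + Gi i j * Du i * Hv j)
      = ∑ b, (∑ c, Gi b c * Du c) *
            (Hv b - (1/2) * ∑ l, (∑ c, Gi l c * Dv c) * (Dg a b l + Dg b a l - Dg l a b))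
        + ∑ b, (∑ c, Gi b c * Dv c) *
            (Hu b - (1/2) * ∑ l, (∑ c, Gi l c * Du c) * (Dg a b l + Dg b a l - Dg l a b)) := by
  have hsplit : ∑ i, ∑ j, ((-∑ q, ∑ p, Gi i p * Dg a p q * Gi q j) * Du i * Dv j
        + Gi i j * Hu i * Dv j + Gi i j * Du i * Hv j)
      = (∑ i, ∑ j, (-∑ q, ∑ p, Gi i p * Dg a p q * Gi q j) * Du i * Dv j)
        + (∑ i, ∑ j, Gi i j * Hu i * Dv j)
        + (∑ i, ∑ j, Gi i j * Du i * Hv j) := by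
    rw [← Finset.sum_add_distrib, ← Finset.sum_add_distrib]
    exact Finset.sum_congr rfl fun i _ => by
      rw [← Finset.sum_add_distrib, ← Finset.sum_add_distrib]
  have hB : ∑ i, ∑ j, Gi i j * Hu i * Dv j = ∑ b, (∑ c, Gi b c * Dv c) * Hu b := by
    refine Finset.sum_congr rfl fun i _ => ?_
    rw [Finset.sum_mul]
    exact Finset.sum_congr rfl fun j _ => by ring
  have hC : ∑ i, ∑ j, Gi i j * Du i * Hv j = ∑ b, (∑ c, Gi b c * Du c) * Hv b := by
    rw [Finset.sum_comm]
    refine Finset.sum_congr rfl fun j _ => ?_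
    rw [Finset.sum_mul]
    exact Finset.sum_congr rfl fun i _ => by rw [hGi i j]
  have hA : ∑ i, ∑ j, (-∑ q, ∑ p, Gi i p * Dg a p q * Gi q j) * Du i * Dv j
      = -∑ q, ∑ p, Dg a p q * (∑ c, Gi p c * Du c) * (∑ c, Gi q c * Dv c) := by
    have step1 : ∑ i, ∑ j, (-∑ q, ∑ p, Gi i p * Dg a p q * Gi q j) * Du i * Dv j
        = ∑ i, ∑ j, ∑ q, ∑ p, -(Gi i p * Dg a p q * Gi q j * Du i * Dv j) := by
      refine Finset.sum_congr rfl fun i _ => Finset.sum_congr rfl fun j _ => ?_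
      rw [neg_mul, neg_mul, Finset.sum_mul, Finset.sum_mul, ← Finset.sum_neg_distrib]
      refine Finset.sum_congr rfl fun q _ => ?_
      rw [Finset.sum_mul, Finset.sum_mul, ← Finset.sum_neg_distrib]
    rw [step1, sum4_swap, ← Finset.sum_neg_distrib]
    refine Finset.sum_congr rfl fun q _ => ?_
    rw [← Finset.sum_neg_distrib]
    refine Finset.sum_congr rfl fun p _ => ?_
    have hfac : ∑ i, ∑ j, (Gi i p * Dg a p q * Gi q j * Du i * Dv j)
        = Dg a p q * (∑ c, Gi p c * Du c) * (∑ c, Gi q c * Dv c) := by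
      calc ∑ i, ∑ j, (Gi i p * Dg a p q * Gi q j * Du i * Dv j)
          = ∑ i, ∑ j, Dg a p q * ((Gi p i * Du i) * (Gi q j * Dv j)) := by
            refine Finset.sum_congr rfl fun i _ => Finset.sum_congr rfl fun j _ => ?_
            rw [hGi i p]; ring
        _ = Dg a p q * ∑ i, ∑ j, (Gi p i * Du i) * (Gi q j * Dv j) := by
            rw [Finset.mul_sum]
            exact Finset.sum_congr rfl fun i _ => by rw [Finset.mul_sum]
        _ = Dg a p q * ((∑ i, Gi p i * Du i) * (∑ j, Gi q j * Dv j)) := by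
            rw [Finset.sum_mul_sum]
        _ = Dg a p q * (∑ c, Gi p c * Du c) * (∑ c, Gi q c * Dv c) := by
            rw [mul_assoc]
    rw [← hfac]
    simp [Finset.sum_neg_distrib]
  rw [hsplit, hA, hB, hC]
  have hkey := L3key Dg hDg a (fun b => ∑ c, Gi b c * Du c) (fun b => ∑ c, Gi b c * Dv c)
  have hR1 : ∑ b, (∑ c, Gi b c * Du c) *
        (Hv b - (1/2) * ∑ l, (∑ c, Gi l c * Dv c) * (Dg a b l + Dg b a l - Dg l a b))
      = ∑ b, (∑ c, Gi b c * Du c) * Hv b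
        - ∑ b, (∑ c, Gi b c * Du c) *
            ((1/2) * ∑ l, (∑ c, Gi l c * Dv c) * (Dg a b l + Dg b a l - Dg l a b)) := by
    rw [← Finset.sum_sub_distrib]
    exact Finset.sum_congr rfl fun b _ => mul_sub _ _ _
  have hR2 : ∑ b, (∑ c, Gi b c * Dv c) *
        (Hu b - (1/2) * ∑ l, (∑ c, Gi l c * Du c) * (Dg a b l + Dg b a l - Dg l a b))
      = ∑ b, (∑ c, Gi b c * Dv c) * Hu b
        - ∑ b, (∑ c, Gi b c * Dv c) *
            ((1/2) * ∑ l, (∑ c, Gi l c * Du c) * (Dg a b l + Dg b a l - Dg l a b)) := by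
    rw [← Finset.sum_sub_distrib]
    exact Finset.sum_congr rfl fun b _ => mul_sub _ _ _
  rw [hR1, hR2]
  linarith [hkey]
end
section
variable {d : ℕ} {g : Met d}
section L3b
variable (hg : ∀ i j, SM fun x => g x i j) (hgpos : ∀ x, (g x).PosDef)

include hgpos in
lemma christof_contract (w : Pt d → ℝ) (x : Pt d) (a b : Fin d) :
    ∑ c, christof g c a b x * pd c w x
      = (1/2) * ∑ l, (∑ c, ginv g x l c * pd c w x) *
          (pd a (fun y => g y b l) x + pd b (fun y => g y a l) x
            - pd l (fun y => g y a b) x) := by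
  unfold christof
  have h1 : ∀ c : Fin d, ((1/2 : ℝ) * ∑ l, ginv g x c l *
        (pd a (fun y => g y b l) x + pd b (fun y => g y a l) x - pd l (fun y => g y a b) x))
          * pd c w x
      = ∑ l, (1/2) * (ginv g x l c * pd c w x *
          (pd a (fun y => g y b l) x + pd b (fun y => g y a l) x
            - pd l (fun y => g y a b) x)) := by
    intro c
    rw [mul_comm ((1/2 : ℝ)) _, Finset.sum_mul, Finset.sum_mul]
    exact Finset.sum_congr rfl fun l _ => by rw [ginv_symm hgpos x c l]; ring
  rw [Finset.sum_congr rfl fun c _ => h1 c, Finset.sum_comm, Finset.mul_sum]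
  refine Finset.sum_congr rfl fun l _ => ?_
  rw [Finset.sum_mul, Finset.mul_sum]

include hg hgpos in
lemma pd_gradInner {u v : Pt d → ℝ} (hu : SM u) (hv : SM v) (x : Pt d) (a : Fin d) :
    pd a (fun y => gradInner g u v y) x
      = ∑ b, (∑ c, ginv g x b c * pd c u x) * covHess g v a b x
        + ∑ b, (∑ c, ginv g x b c * pd c v x) * covHess g u a b x := by
  have hDg : ∀ k p q : Fin d, pd k (fun y => g y p q) x = pd k (fun y => g y q p) x := by
    intro k p q
    congr 1
    funext y
    exact gsymm hgpos y p q
  rw [pd_gradInner_expand hg hgpos hu hv x a]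
  have hexp : ∑ i, ∑ j, (pd a (fun y => ginv g y i j) x * pd i u x * pd j v x
        + ginv g x i j * pd a (pd i u) x * pd j v x
        + ginv g x i j * pd i u x * pd a (pd j v) x)
      = ∑ i, ∑ j, ((-∑ q, ∑ p, ginv g x i p * pd a (fun y => g y p q) x * ginv g x q j)
          * pd i u x * pd j v x
        + ginv g x i j * pd a (pd i u) x * pd j v x
        + ginv g x i j * pd i u x * pd a (pd j v) x) := by
    refine Finset.sum_congr rfl fun i _ => Finset.sum_congr rfl fun j _ => ?_
    rw [pd_ginv hg hgpos x a i j]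
  rw [hexp]
  have hcore := L3core (fun i j => ginv g x i j) (ginv_symm hgpos x)
    (fun k p q => pd k (fun y => g y p q) x) hDg
    (fun i => pd i u x) (fun i => pd i v x)
    (fun i => pd a (pd i u) x) (fun i => pd a (pd i v) x) a
  rw [hcore]
  have hcov : ∀ (w : Pt d → ℝ) (b : Fin d), covHess g w a b x
      = pd a (pd b w) x - (1/2) * ∑ l, (∑ c, ginv g x l c * pd c w x) *
          (pd a (fun y => g y b l) x + pd b (fun y => g y a l) x
            - pd l (fun y => g y a b) x) := by
    intro w b
    rw [covHess, christof_contract hgpos w x a b]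
  refine congrArg₂ (· + ·) ?_ ?_ <;>
    exact Finset.sum_congr rfl fun b _ => by rw [hcov]
end L3b
end
section
variable {d : ℕ}

variable {g : Met d}
section smooth2
variable (hg : ∀ i j, SM fun x => g x i j) (hgpos : ∀ x, (g x).PosDef)
include hg hgpos

lemma SM.rho' {ν : Pt d → ℝ} (hν : SM ν) : SM fun x => rho g ν x := by
  have hchristof := SM.christof' hg hgpos
  have hginv := SM.ginv_entry hg hgpos
  have hriemann : ∀ l i j k, SM fun x => riemann g l i j k x := fun l i j k =>
    (((hchristof l j k).pd i).sub ((hchristof l i k).pd j)).add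
      (SM.sum fun m _ => ((hchristof l i m).mul (hchristof m j k)).sub
        ((hchristof l j m).mul (hchristof m i k)))
  have hricci : ∀ j k, SM fun x => ricci g j k x := fun j k =>
    SM.sum fun i _ => hriemann i i j k
  have hscal : SM fun x => scal g x :=
    SM.sum fun j _ => SM.sum fun k _ => (hginv j k).mul (hricci j k)
  have hJc : SM fun x => Jc g x := hscal.div_const _
  have hlap : SM fun x => laplacian g ν x :=
    SM.sum fun i _ => SM.sum fun j _ => (hginv i j).mul
      (((hν.pd j).pd i).sub (SM.sum fun k _ => (hchristof k i j).mul (hν.pd k)))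
  exact (SM.const _).mul (hlap.add (hJc.mul hν))

lemma covHess_symm {f : Pt d → ℝ} (hf : SM f) (x : Pt d) (a b : Fin d) :
    covHess g f a b x = covHess g f b a x := by
  unfold covHess
  rw [pd_pd_symm hf a b x]
  congr 1
  refine Finset.sum_congr rfl fun c _ => ?_
  unfold christof
  congr 2
  refine Finset.sum_congr rfl fun l _ => ?_
  rw [show (fun y => g y a b) = fun y => g y b a from funext fun y => gsymm hgpos y a b]
  ring

end smooth2

lemma laplacian_eq_covHess (g : Met d) (f : Pt d → ℝ) (x : Pt d) :
    laplacian g f x = ∑ i, ∑ j, ginv g x i j * covHess g f i j x := rfl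
end
section
variable {d : ℕ} {g : Met d}

lemma contract_gradInner (u v : Pt d → ℝ) (x : Pt d) :
    ∑ a, (∑ c, ginv g x a c * pd c u x) * pd a v x = gradInner g v u x := by
  unfold gradInner
  refine Finset.sum_congr rfl fun a _ => ?_
  rw [Finset.sum_mul]
  exact Finset.sum_congr rfl fun c _ => by ring

lemma gradInner_symm (hgpos : ∀ x, (g x).PosDef) (u v : Pt d → ℝ) (x : Pt d) :
    gradInner g u v x = gradInner g v u x := by
  unfold gradInner
  rw [Finset.sum_comm]
  exact Finset.sum_congr rfl fun j _ => Finset.sum_congr rfl fun i _ => by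
    rw [ginv_symm hgpos x j i]; ring

lemma contract2 (U V : Fin d → ℝ) (W : Fin d → Fin d → ℝ) :
    ∑ a, U a * ∑ b, V b * W a b = ∑ a, ∑ b, U a * V b * W a b := by
  refine Finset.sum_congr rfl fun a _ => ?_
  rw [Finset.mul_sum]
  exact Finset.sum_congr rfl fun b _ => by ring


end

/-- Lemma C of the paper: suppose `σ` is a unit defining density representative for
`Σ = {σ=0}` and `μ` a `σ`-minimal unit defining density representative, i.e. near
`Λ = {σ=0} ∩ {μ=0}`:  `S_μ = 1 + μᵈ R₁`, `S_σ = 1 + σᵈ R₂`, and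
`g(dμ,dσ) + μρ_σ + σρ_μ = μ C + σ^{d-1} R₃` for smooth `R₁,R₂,R₃,C`.  Then along `Λ`,
`C = ÎI^Σ(m̂,m̂)`, where `m̂ = dμ|_Λ` is the unit conormal of `Λ` in `Σ` and
`ÎI^Σ(m̂,m̂) = m̂^a m̂^b ∇_a ∂_b σ - H_Σ` with
`H_Σ = (1/(d-1))(g^{ab} - n̂^a n̂^b)∇_a ∂_b σ` the mean curvature of `Σ` (`n̂ = dσ|_Σ`). -/
theorem minimal_defining_density_C_eq_II {d : ℕ} (hd : 3 ≤ d)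
    (g : Met d) (hg : ∀ i j, ContDiff ℝ (⊤ : ℕ∞) fun x => g x i j) (hgpos : ∀ x, (g x).PosDef)
    (σ μ R₁ R₂ R₃ C : Pt d → ℝ)
    (hσ : ContDiff ℝ (⊤ : ℕ∞) σ) (hμ : ContDiff ℝ (⊤ : ℕ∞) μ)
    (hR₁ : ContDiff ℝ (⊤ : ℕ∞) R₁) (hR₂ : ContDiff ℝ (⊤ : ℕ∞) R₂) (hR₃ : ContDiff ℝ (⊤ : ℕ∞) R₃)
    (hC : ContDiff ℝ (⊤ : ℕ∞) C)
    (h1 : ∀ x, Sdens g μ x = 1 + μ x ^ d * R₁ x)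
    (h2 : ∀ x, Sdens g σ x = 1 + σ x ^ d * R₂ x)
    (h3 : ∀ x, gradInner g μ σ x + μ x * rho g σ x + σ x * rho g μ x
            = μ x * C x + σ x ^ (d - 1) * R₃ x) :
    ∀ x, σ x = 0 → μ x = 0 →
      C x =
        (∑ a, ∑ b,
          (∑ c, ginv g x a c * pd c μ x) * (∑ c, ginv g x b c * pd c μ x)
            * covHess g σ a b x)
        - (1 / ((d : ℝ) - 1)) *
            (∑ a, ∑ b,
              (ginv g x a b
                - (∑ c, ginv g x a c * pd c σ x) * (∑ c, ginv g x b c * pd c σ x))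
              * covHess g σ a b x) := by
  intro x hσx hμx
  -- smoothness conversions
  have hg' : ∀ i j, SM fun x => g x i j := fun i j => SM.of_top (hg i j)
  have hσ' : SM σ := SM.of_top hσ
  have hμ' : SM μ := SM.of_top hμ
  have hR₁' : SM R₁ := SM.of_top hR₁
  have hR₂' : SM R₂ := SM.of_top hR₂
  have hR₃' : SM R₃ := SM.of_top hR₃
  have hC' : SM C := SM.of_top hC
  have hρμ : SM fun y => rho g μ y := SM.rho' hg' hgpos hμ'
  have hρσ : SM fun y => rho g σ y := SM.rho' hg' hgpos hσ'
  have hd0 : (d : ℝ) ≠ 0 := by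
    have : (3 : ℝ) ≤ (d : ℝ) := by exact_mod_cast hd
    linarith
  have hd1 : (d : ℝ) - 1 ≠ 0 := by
    have : (3 : ℝ) ≤ (d : ℝ) := by exact_mod_cast hd
    linarith
  -- values at x
  have hSμ : gradSq g μ x = 1 := by
    have := h1 x
    rw [Sdens, hμx] at this
    simpa [zero_pow (by omega : d ≠ 0)] using this
  have hSσ : gradSq g σ x = 1 := by
    have := h2 x
    rw [Sdens, hσx] at this
    simpa [zero_pow (by omega : d ≠ 0)] using this
  have hcross : gradInner g μ σ x = 0 := by
    have := h3 x
    rw [hμx, hσx] at this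
    simpa [zero_pow (by omega : d - 1 ≠ 0)] using this
  -- first-derivative identities
  have E1 : ∀ a : Fin d,
      2 * (∑ b, (∑ c, ginv g x b c * pd c μ x) * covHess g μ a b x)
        + 2 * (pd a μ x * rho g μ x) = 0 := by
    intro a
    have hfun : (fun y => gradInner g μ μ y + 2 * μ y * rho g μ y)
        = fun y => 1 + μ y ^ d * R₁ y := by
      funext y; exact h1 y
    have hL : pd a (fun y => gradInner g μ μ y + 2 * μ y * rho g μ y) x
        = pd a (fun y => gradInner g μ μ y) x
          + ((2 * μ x) * pd a (fun y => rho g μ y) x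
            + rho g μ x * (2 * pd a μ x + μ x * 0)) := by
      rw [pd_add ((SM.gradInner' hg' hgpos hμ' hμ').diffAt x)
          (((( SM.const 2).mul hμ').mul hρμ).diffAt x) a,
        pd_mul (((SM.const 2).mul hμ').diffAt x) (hρμ.diffAt x) a,
        pd_mul ((SM.const 2).diffAt x) (hμ'.diffAt x) a, pd_const]
    have hR : pd a (fun y => 1 + μ y ^ d * R₁ y) x = 0 := by
      rw [pd_add ((SM.const 1).diffAt x) (((hμ'.pow d).mul hR₁').diffAt x) a, pd_const,
        pd_pow_mul_zero hμ' hR₁' (by omega) hμx a]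
      ring
    have heq : pd a (fun y => gradInner g μ μ y + 2 * μ y * rho g μ y) x
        = pd a (fun y => 1 + μ y ^ d * R₁ y) x := by rw [hfun]
    rw [hL, hR] at heq
    rw [pd_gradInner hg' hgpos hμ' hμ' x a] at heq
    rw [hμx] at heq
    linarith [heq]
  have E2 : ∀ a : Fin d,
      2 * (∑ b, (∑ c, ginv g x b c * pd c σ x) * covHess g σ a b x)
        + 2 * (pd a σ x * rho g σ x) = 0 := by
    intro a
    have hfun : (fun y => gradInner g σ σ y + 2 * σ y * rho g σ y)
        = fun y => 1 + σ y ^ d * R₂ y := by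
      funext y; exact h2 y
    have hL : pd a (fun y => gradInner g σ σ y + 2 * σ y * rho g σ y) x
        = pd a (fun y => gradInner g σ σ y) x
          + ((2 * σ x) * pd a (fun y => rho g σ y) x
            + rho g σ x * (2 * pd a σ x + σ x * 0)) := by
      rw [pd_add ((SM.gradInner' hg' hgpos hσ' hσ').diffAt x)
          ((((SM.const 2).mul hσ').mul hρσ).diffAt x) a,
        pd_mul (((SM.const 2).mul hσ').diffAt x) (hρσ.diffAt x) a,
        pd_mul ((SM.const 2).diffAt x) (hσ'.diffAt x) a, pd_const]
    have hR : pd a (fun y => 1 + σ y ^ d * R₂ y) x = 0 := by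
      rw [pd_add ((SM.const 1).diffAt x) (((hσ'.pow d).mul hR₂').diffAt x) a, pd_const,
        pd_pow_mul_zero hσ' hR₂' (by omega) hσx a]
      ring
    have heq : pd a (fun y => gradInner g σ σ y + 2 * σ y * rho g σ y) x
        = pd a (fun y => 1 + σ y ^ d * R₂ y) x := by rw [hfun]
    rw [hL, hR] at heq
    rw [pd_gradInner hg' hgpos hσ' hσ' x a] at heq
    rw [hσx] at heq
    linarith [heq]
  have E3 : ∀ a : Fin d,
      (∑ b, (∑ c, ginv g x b c * pd c μ x) * covHess g σ a b x)
        + (∑ b, (∑ c, ginv g x b c * pd c σ x) * covHess g μ a b x)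
        + pd a μ x * rho g σ x + pd a σ x * rho g μ x
      = C x * pd a μ x := by
    intro a
    have hfun : (fun y => gradInner g μ σ y + μ y * rho g σ y + σ y * rho g μ y)
        = fun y => μ y * C y + σ y ^ (d - 1) * R₃ y := by
      funext y; exact h3 y
    have hL : pd a (fun y => gradInner g μ σ y + μ y * rho g σ y + σ y * rho g μ y) x
        = pd a (fun y => gradInner g μ σ y) x
          + (μ x * pd a (fun y => rho g σ y) x + rho g σ x * pd a μ x)
          + (σ x * pd a (fun y => rho g μ y) x + rho g μ x * pd a σ x) := by
      rw [pd_add (((SM.gradInner' hg' hgpos hμ' hσ').add (hμ'.mul hρσ)).diffAt x)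
          ((hσ'.mul hρμ).diffAt x) a,
        pd_add ((SM.gradInner' hg' hgpos hμ' hσ').diffAt x) ((hμ'.mul hρσ).diffAt x) a,
        pd_mul (hμ'.diffAt x) (hρσ.diffAt x) a,
        pd_mul (hσ'.diffAt x) (hρμ.diffAt x) a]
    have hR : pd a (fun y => μ y * C y + σ y ^ (d - 1) * R₃ y) x = C x * pd a μ x := by
      rw [pd_add ((hμ'.mul hC').diffAt x) (((hσ'.pow (d-1)).mul hR₃').diffAt x) a,
        pd_mul (hμ'.diffAt x) (hC'.diffAt x) a,
        pd_pow_mul_zero hσ' hR₃' (by omega) hσx a, hμx]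
      ring
    have heq2 : pd a (fun y => gradInner g μ σ y + μ y * rho g σ y + σ y * rho g μ y) x
        = pd a (fun y => μ y * C y + σ y ^ (d - 1) * R₃ y) x := by rw [hfun]
    rw [hL, hR] at heq2
    rw [pd_gradInner hg' hgpos hμ' hσ' x a] at heq2
    rw [hμx, hσx] at heq2
    linarith [heq2]
  -- contraction scalars
  have hUμ : ∑ a, (∑ c, ginv g x a c * pd c μ x) * pd a μ x = 1 := by
    rw [contract_gradInner]
    simpa [gradSq] using hSμ
  have hUσ : ∑ a, (∑ c, ginv g x a c * pd c μ x) * pd a σ x = 0 := by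
    rw [contract_gradInner, gradInner_symm hgpos]
    exact hcross
  have hNμ : ∑ a, (∑ c, ginv g x a c * pd c σ x) * pd a μ x = 0 := by
    rw [contract_gradInner]
    exact hcross
  have hNσ : ∑ a, (∑ c, ginv g x a c * pd c σ x) * pd a σ x = 1 := by
    rw [contract_gradInner]
    simpa [gradSq] using hSσ
  -- contracted identities
  have c1 : ∑ a, ∑ b, (∑ c, ginv g x a c * pd c σ x)
        * ((∑ c, ginv g x b c * pd c μ x) * covHess g μ a b x) = 0 := by
    have h : ∀ a : Fin d, (∑ b, (∑ c, ginv g x b c * pd c μ x) * covHess g μ a b x)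
        + pd a μ x * rho g μ x = 0 := fun a => by linarith [E1 a]
    have hsum : ∑ a, ((∑ c, ginv g x a c * pd c σ x)
        * ((∑ b, (∑ c, ginv g x b c * pd c μ x) * covHess g μ a b x)
            + pd a μ x * rho g μ x)) = 0 := by
      rw [Finset.sum_congr rfl fun a _ => by rw [h a, mul_zero]]
      exact Finset.sum_const_zero
    have hexp : ∑ a, ((∑ c, ginv g x a c * pd c σ x)
        * ((∑ b, (∑ c, ginv g x b c * pd c μ x) * covHess g μ a b x)
            + pd a μ x * rho g μ x))
        = (∑ a, ∑ b, (∑ c, ginv g x a c * pd c σ x)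
            * ((∑ c, ginv g x b c * pd c μ x) * covHess g μ a b x))
          + (∑ a, (∑ c, ginv g x a c * pd c σ x) * pd a μ x) * rho g μ x := by
      rw [Finset.sum_mul, ← Finset.sum_add_distrib]
      refine Finset.sum_congr rfl fun a _ => ?_
      rw [mul_add, Finset.mul_sum]
      ring
    rw [hexp, hNμ] at hsum
    linarith [hsum]
  have c2 : (∑ a, ∑ b, (∑ c, ginv g x a c * pd c σ x)
        * ((∑ c, ginv g x b c * pd c σ x) * covHess g σ a b x)) + rho g σ x = 0 := by
    have h : ∀ a : Fin d, (∑ b, (∑ c, ginv g x b c * pd c σ x) * covHess g σ a b x)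
        + pd a σ x * rho g σ x = 0 := fun a => by linarith [E2 a]
    have hsum : ∑ a, ((∑ c, ginv g x a c * pd c σ x)
        * ((∑ b, (∑ c, ginv g x b c * pd c σ x) * covHess g σ a b x)
            + pd a σ x * rho g σ x)) = 0 := by
      rw [Finset.sum_congr rfl fun a _ => by rw [h a, mul_zero]]
      exact Finset.sum_const_zero
    have hexp : ∑ a, ((∑ c, ginv g x a c * pd c σ x)
        * ((∑ b, (∑ c, ginv g x b c * pd c σ x) * covHess g σ a b x)
            + pd a σ x * rho g σ x))
        = (∑ a, ∑ b, (∑ c, ginv g x a c * pd c σ x)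
            * ((∑ c, ginv g x b c * pd c σ x) * covHess g σ a b x))
          + (∑ a, (∑ c, ginv g x a c * pd c σ x) * pd a σ x) * rho g σ x := by
      rw [Finset.sum_mul, ← Finset.sum_add_distrib]
      refine Finset.sum_congr rfl fun a _ => ?_
      rw [mul_add, Finset.mul_sum]
      ring
    rw [hexp, hNσ, one_mul] at hsum
    exact hsum
  have c3 : (∑ a, ∑ b, (∑ c, ginv g x a c * pd c μ x)
        * ((∑ c, ginv g x b c * pd c μ x) * covHess g σ a b x))
      + (∑ a, ∑ b, (∑ c, ginv g x a c * pd c μ x)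
        * ((∑ c, ginv g x b c * pd c σ x) * covHess g μ a b x))
      + rho g σ x = C x := by
    have hsum : ∑ a, ((∑ c, ginv g x a c * pd c μ x)
        * ((∑ b, (∑ c, ginv g x b c * pd c μ x) * covHess g σ a b x)
            + (∑ b, (∑ c, ginv g x b c * pd c σ x) * covHess g μ a b x)
            + pd a μ x * rho g σ x + pd a σ x * rho g μ x))
        = ∑ a, ((∑ c, ginv g x a c * pd c μ x) * (C x * pd a μ x)) := by
      refine Finset.sum_congr rfl fun a _ => ?_
      rw [E3 a]
    have hexp : ∑ a, ((∑ c, ginv g x a c * pd c μ x)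
        * ((∑ b, (∑ c, ginv g x b c * pd c μ x) * covHess g σ a b x)
            + (∑ b, (∑ c, ginv g x b c * pd c σ x) * covHess g μ a b x)
            + pd a μ x * rho g σ x + pd a σ x * rho g μ x))
        = (∑ a, ∑ b, (∑ c, ginv g x a c * pd c μ x)
            * ((∑ c, ginv g x b c * pd c μ x) * covHess g σ a b x))
          + (∑ a, ∑ b, (∑ c, ginv g x a c * pd c μ x)
            * ((∑ c, ginv g x b c * pd c σ x) * covHess g μ a b x))
          + (∑ a, (∑ c, ginv g x a c * pd c μ x) * pd a μ x) * rho g σ x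
          + (∑ a, (∑ c, ginv g x a c * pd c μ x) * pd a σ x) * rho g μ x := by
      rw [Finset.sum_mul, Finset.sum_mul, ← Finset.sum_add_distrib, ← Finset.sum_add_distrib,
        ← Finset.sum_add_distrib]
      refine Finset.sum_congr rfl fun a _ => ?_
      rw [mul_add, mul_add, mul_add, Finset.mul_sum, Finset.mul_sum]
      ring
    have hrhs : ∑ a, ((∑ c, ginv g x a c * pd c μ x) * (C x * pd a μ x))
        = C x * ∑ a, (∑ c, ginv g x a c * pd c μ x) * pd a μ x := by
      rw [Finset.mul_sum]
      exact Finset.sum_congr rfl fun a _ => by ring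
    rw [hexp, hrhs, hUμ, hUσ] at hsum
    linarith [hsum]
  -- the cross term vanishes (uses symmetry of the covariant Hessian)
  have hB : ∑ a, ∑ b, (∑ c, ginv g x a c * pd c μ x)
        * ((∑ c, ginv g x b c * pd c σ x) * covHess g μ a b x) = 0 := by
    rw [Finset.sum_comm]
    rw [Finset.sum_congr rfl fun b _ => Finset.sum_congr rfl fun a _ => by
      rw [covHess_symm hg' hgpos hμ' x a b]]
    calc ∑ b, ∑ a, (∑ c, ginv g x a c * pd c μ x)
          * ((∑ c, ginv g x b c * pd c σ x) * covHess g μ b a x)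
        = ∑ b, ∑ a, (∑ c, ginv g x b c * pd c σ x)
          * ((∑ c, ginv g x a c * pd c μ x) * covHess g μ b a x) :=
          Finset.sum_congr rfl fun b _ => Finset.sum_congr rfl fun a _ => by ring
      _ = 0 := c1
  -- laplacian and rho at x
  have hρσval : rho g σ x = -(1 / (d:ℝ)) * laplacian g σ x := by
    rw [rho, hσx]
    ring
  have hLap : ∑ a, ∑ b, ginv g x a b * covHess g σ a b x = -(d:ℝ) * rho g σ x := by
    rw [← laplacian_eq_covHess, hρσval]
    field_simp
  -- final assembly
  have hgoalA : ∑ a, ∑ b, (∑ c, ginv g x a c * pd c μ x) * (∑ c, ginv g x b c * pd c μ x)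
        * covHess g σ a b x
      = ∑ a, ∑ b, (∑ c, ginv g x a c * pd c μ x)
        * ((∑ c, ginv g x b c * pd c μ x) * covHess g σ a b x) :=
    Finset.sum_congr rfl fun a _ => Finset.sum_congr rfl fun b _ => by ring
  have hgoalB : ∑ a, ∑ b, (ginv g x a b
        - (∑ c, ginv g x a c * pd c σ x) * (∑ c, ginv g x b c * pd c σ x))
        * covHess g σ a b x
      = (∑ a, ∑ b, ginv g x a b * covHess g σ a b x)
        - ∑ a, ∑ b, (∑ c, ginv g x a c * pd c σ x)
            * ((∑ c, ginv g x b c * pd c σ x) * covHess g σ a b x) := by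
    rw [← Finset.sum_sub_distrib]
    refine Finset.sum_congr rfl fun a _ => ?_
    rw [← Finset.sum_sub_distrib]
    exact Finset.sum_congr rfl fun b _ => by ring
  rw [hgoalA, hgoalB, hLap]
  have hD : ∑ a, ∑ b, (∑ c, ginv g x a c * pd c σ x)
      * ((∑ c, ginv g x b c * pd c σ x) * covHess g σ a b x) = -rho g σ x := by
    linarith [c2]
  rw [hD]
  have harith : (1 / ((d:ℝ) - 1)) * (-(d:ℝ) * rho g σ x - -rho g σ x) = -rho g σ x := by
    field_simp
    ring
  rw [harith]
  linarith [c3, hB]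
end Holo
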